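/- arXiv:1901.06811 — 3 statements merged into one kernel-verified Lean document; each statement's English description precedes it below -/
import Mathlib

section
/- The polarization martingale εₙ (with ε₀ = ε, and εₙ₊₁ equal to εₙ² or 1-(1-εₙ)² each with probability 1/2) converges almost surely to a {0,1}-valued random variable ε_∞ with P(ε_∞ = 1) = ε. -/
open MeasureTheory ProbabilityTheory Filter
open scoped ENNReal Topology

/-!
The potential `√(x (1 - x))` contracts in mean by the factor `√3 / 2` at each step (a fair coin
averages its values at `x²` and `1 - (1 - x)²`), so `∑ₙ √(Xₙ (1 - Xₙ))` has finite mean and is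
a.s. finite. A step moves `Xₙ` by `Xₙ (1 - Xₙ) ≤ √(Xₙ (1 - Xₙ))`, so `Xₙ` is a.s. Cauchy, and its
limit has potential zero, i.e. lies in `{0, 1}`. The same averaging gives `E Xₙ = ε`, so by
dominated convergence `P(X_∞ = 1) = E X_∞ = ε`.
-/

noncomputable def polarStep (b : Bool) (x : ℝ) : ℝ :=
  if b then x ^ 2 else 1 - (1 - x) ^ 2

lemma polarStep_mem_Icc {x : ℝ} (hx : x ∈ Set.Icc (0 : ℝ) 1) (b : Bool) :
    polarStep b x ∈ Set.Icc (0 : ℝ) 1 := by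
  obtain ⟨h0, h1⟩ := hx
  cases b <;> simp only [polarStep, Bool.false_eq_true, ↓reduceIte, Set.mem_Icc] <;>
    constructor <;> nlinarith

@[fun_prop]
lemma continuous_polarStep (b : Bool) : Continuous (polarStep b) := by
  cases b <;> unfold polarStep <;> simp only [Bool.false_eq_true, ↓reduceIte] <;> fun_prop

lemma measurable_uncurry_polarStep : Measurable (Function.uncurry polarStep) :=
  measurable_from_prod_countable_right fun b => (continuous_polarStep b).measurable

lemma polarStep_true_add_false (x : ℝ) : polarStep true x + polarStep false x = 2 * x := by
  simp only [polarStep, ↓reduceIte, Bool.false_eq_true]; ring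

noncomputable def polarPotential (x : ℝ) : ℝ :=
  √(x * (1 - x))

@[fun_prop]
lemma continuous_polarPotential : Continuous polarPotential := by
  unfold polarPotential; fun_prop

lemma eq_zero_or_eq_one_of_polarPotential_eq_zero {x : ℝ} (hx : x ∈ Set.Icc (0 : ℝ) 1)
    (hpot : polarPotential x = 0) : x = 0 ∨ x = 1 := by
  obtain ⟨h0, h1⟩ := hx
  rw [polarPotential, Real.sqrt_eq_zero'] at hpot
  rcases mul_eq_zero.1 (le_antisymm hpot (mul_nonneg h0 (by linarith))) with h | h
  · exact Or.inl h
  · exact Or.inr (by linarith)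

lemma abs_polarStep_sub_le {x : ℝ} (hx : x ∈ Set.Icc (0 : ℝ) 1) (b : Bool) :
    |polarStep b x - x| ≤ polarPotential x := by
  obtain ⟨h0, h1⟩ := hx
  have hv : 0 ≤ x * (1 - x) := mul_nonneg h0 (by linarith)
  have hstep : |polarStep b x - x| = x * (1 - x) := by
    cases b
    · simp only [polarStep, Bool.false_eq_true, ↓reduceIte]
      rw [show 1 - (1 - x) ^ 2 - x = x * (1 - x) by ring, abs_of_nonneg hv]
    · simp only [polarStep, ↓reduceIte]
      rw [show x ^ 2 - x = -(x * (1 - x)) by ring, abs_neg, abs_of_nonneg hv]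
  rw [hstep, polarPotential]
  have hv1 : 0 ≤ 1 - x * (1 - x) := by nlinarith
  exact Real.le_sqrt_of_sq_le (by nlinarith [mul_nonneg hv hv1])

lemma polarPotential_polarStep_add_le {x : ℝ} (hx : x ∈ Set.Icc (0 : ℝ) 1) :
    polarPotential (polarStep true x) + polarPotential (polarStep false x) ≤
      √3 * polarPotential x := by
  obtain ⟨h0, h1⟩ := hx
  have ht : 0 ≤ x * (1 - x) := mul_nonneg h0 (by linarith)
  set u := √(x * (1 + x))
  set v := √((1 - x) * (2 - x))
  have hu : u ^ 2 = x * (1 + x) := Real.sq_sqrt (by nlinarith)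
  have hv : v ^ 2 = (1 - x) * (2 - x) := Real.sq_sqrt (by nlinarith)
  -- with `t = x (1 - x)`: `u² + v² = 2 - 2t` and `(2uv)² = 4t (2 + t) ≤ (1 + 2t)²` as `t ≤ 1/4`,
  -- so `(u + v)² ≤ 3`
  have huv : 2 * (u * v) ≤ 1 + 2 * (x * (1 - x)) :=
    abs_le_of_sq_le_sq' (by rw [mul_pow, mul_pow, hu, hv]; nlinarith [sq_nonneg (1 - 2 * x)])
      (by positivity) |>.2
  have hsum : u + v ≤ √3 :=
    Real.le_sqrt_of_sq_le (by nlinarith)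
  have hsplit : polarPotential (polarStep true x) + polarPotential (polarStep false x) =
      polarPotential x * (u + v) := by
    simp only [polarPotential, polarStep, ↓reduceIte, Bool.false_eq_true]
    rw [show x ^ 2 * (1 - x ^ 2) = x * (1 - x) * (x * (1 + x)) by ring,
      show (1 - (1 - x) ^ 2) * (1 - (1 - (1 - x) ^ 2)) = x * (1 - x) * ((1 - x) * (2 - x)) by ring,
      Real.sqrt_mul ht, Real.sqrt_mul ht, ← mul_add]
  rw [hsplit, mul_comm (√3)]
  exact mul_le_mul_of_nonneg_left hsum (Real.sqrt_nonneg _)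

section

variable {Ω : Type*} [MeasurableSpace Ω] {μ : Measure Ω}

lemma ProbabilityTheory.iIndepFun.indepFun_of_measurable_natural {β γ : Type*}
    [TopologicalSpace β] [TopologicalSpace.MetrizableSpace β] [MeasurableSpace β] [BorelSpace β]
    [MeasurableSpace γ] {B : ℕ → Ω → β} (hBm : ∀ n, StronglyMeasurable (B n))
    (hB : iIndepFun B μ) {n k : ℕ} (hnk : n < k) {Y : Ω → γ}
    (hY : Measurable[Filtration.natural B hBm n] Y) :
    IndepFun Y (B k) μ := by
  rw [IndepFun_iff_Indep]
  have hpast_future := indep_iSup_of_disjoint (fun i => (hBm i).measurable.comap_le) hB.iIndep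
    (S := Set.Iic n) (T := {k}) (by simpa using hnk)
  rw [iSup_singleton] at hpast_future
  exact indep_of_indep_of_le_left hpast_future hY.comap_le

lemma ProbabilityTheory.IndepFun.integral_apply_coin_eq_average [IsFiniteMeasure μ] {α : Type*}
    [MeasurableSpace α] {Y : Ω → α} {b : Ω → Bool} (hYb : IndepFun Y b μ) (hb : Measurable b)
    (hfair : μ {ω | b ω = true} = 1 / 2) {F : Bool → α → ℝ} (hF : ∀ c, Measurable (F c))
    (hFi : ∀ c, Integrable (fun ω => F c (Y ω)) μ) :
    ∫ ω, F (b ω) (Y ω) ∂μ = ∫ ω, (F true (Y ω) + F false (Y ω)) / 2 ∂μ := by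
  set coin : Ω → ℝ := Set.indicator {ω | b ω = true} 1
  have hset : MeasurableSet {ω | b ω = true} := hb (measurableSet_singleton true)
  have hcoin_int : ∫ ω, coin ω ∂μ = 1 / 2 := by
    rw [integral_indicator_one hset, measureReal_def, hfair]
    norm_num
  have hindep : IndepFun coin (fun ω => F true (Y ω) - F false (Y ω)) μ :=
    hYb.symm.comp (measurable_of_countable (Set.indicator {true} 1)) ((hF true).sub (hF false))
  have hsplit : (fun ω => F (b ω) (Y ω)) =
      fun ω => F false (Y ω) + coin ω * (F true (Y ω) - F false (Y ω)) := by
    ext ω; cases h : b ω <;> simp [coin, h]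
  have hdiff : Integrable (fun ω => F true (Y ω) - F false (Y ω)) μ := (hFi true).sub (hFi false)
  have hcoin : Integrable coin μ := (integrable_const 1).indicator hset
  have hprod : Integrable (fun ω => coin ω * (F true (Y ω) - F false (Y ω))) μ :=
    hindep.integrable_mul hcoin hdiff
  rw [hsplit, integral_add (hFi false) hprod,
    hindep.integral_fun_mul_eq_mul_integral hcoin.1 hdiff.1, hcoin_int,
    integral_sub (hFi true) (hFi false), integral_div, integral_add (hFi true) (hFi false)]
  ring

lemma integrable_comp_of_mem_Icc [IsFiniteMeasure μ] {g : ℝ → ℝ} (hg : Continuous g)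
    {Y : Ω → ℝ} (hY : Measurable Y) (hY01 : ∀ ω, Y ω ∈ Set.Icc (0 : ℝ) 1) :
    Integrable (fun ω => g (Y ω)) μ := by
  obtain ⟨C, hC⟩ := isCompact_Icc.exists_bound_of_continuousOn hg.continuousOn
  exact Integrable.of_bound (hg.measurable.comp hY).aestronglyMeasurable C
    (ae_of_all _ fun ω => hC _ (hY01 ω))

lemma ae_summable_of_summable_integral {f : ℕ → Ω → ℝ} (hf : ∀ n, Integrable (f n) μ)
    (hf0 : ∀ n, 0 ≤ᵐ[μ] f n) (hsum : Summable fun n => ∫ ω, f n ω ∂μ) :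
    ∀ᵐ ω ∂μ, Summable fun n => f n ω := by
  have hmeas : ∀ n, AEMeasurable (fun ω => ENNReal.ofReal (f n ω)) μ :=
    fun n => (hf n).aemeasurable.ennreal_ofReal
  have hfinite : ∫⁻ ω, ∑' n, ENNReal.ofReal (f n ω) ∂μ ≠ ∞ := by
    rw [lintegral_tsum hmeas,
      tsum_congr fun n => (ofReal_integral_eq_lintegral_ofReal (hf n) (hf0 n)).symm,
      ← ENNReal.ofReal_tsum_of_nonneg (fun n => integral_nonneg_of_ae (hf0 n)) hsum]
    exact ENNReal.ofReal_ne_top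
  filter_upwards [ae_lt_top' (AEMeasurable.tsum hmeas) hfinite, ae_all_iff.2 hf0]
    with ω hω hω0
  exact (ENNReal.summable_toReal hω.ne).congr fun n => ENNReal.toReal_ofReal (hω0 n)

lemma measure_eq_one_eq_ofReal_integral [IsFiniteMeasure μ] {f : Ω → ℝ} (hf : Measurable f)
    (h01 : ∀ᵐ ω ∂μ, f ω = 0 ∨ f ω = 1) :
    μ {ω | f ω = 1} = ENNReal.ofReal (∫ ω, f ω ∂μ) := by
  have hind : f =ᵐ[μ] Set.indicator {ω | f ω = 1} 1 := by
    filter_upwards [h01] with ω hω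
    rcases hω with h | h <;> simp [Set.indicator, h]
  have hset : MeasurableSet {ω | f ω = 1} := hf (measurableSet_singleton 1)
  rw [integral_congr_ae hind, integral_indicator_one hset, ofReal_measureReal]

structure IsPolarization (μ : Measure Ω) (B : ℕ → Ω → Bool) (ε : ℝ) (X : ℕ → Ω → ℝ) : Prop where
  stronglyMeasurable_coin : ∀ n, StronglyMeasurable (B n)
  iIndepFun_coin : iIndepFun B μ
  measure_coin_eq_true : ∀ n, μ {ω | B n ω = true} = 1 / 2
  init_mem_Icc : ε ∈ Set.Icc (0 : ℝ) 1
  zero : ∀ ω, X 0 ω = ε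
  succ : ∀ n ω, X (n + 1) ω = polarStep (B (n + 1) ω) (X n ω)

namespace IsPolarization

variable {B : ℕ → Ω → Bool} {ε : ℝ} {X : ℕ → Ω → ℝ}

lemma mem_Icc (hX : IsPolarization μ B ε X) (n : ℕ) (ω : Ω) : X n ω ∈ Set.Icc (0 : ℝ) 1 := by
  induction n with
  | zero => rw [hX.zero]; exact hX.init_mem_Icc
  | succ n ih => rw [hX.succ]; exact polarStep_mem_Icc ih _

lemma measurable_natural (hX : IsPolarization μ B ε X) (n : ℕ) :
    Measurable[Filtration.natural B hX.stronglyMeasurable_coin n] (X n) := by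
  induction n with
  | zero => rw [funext hX.zero]; exact measurable_const
  | succ n ih =>
    have hB : Measurable[Filtration.natural B hX.stronglyMeasurable_coin (n + 1)] (B (n + 1)) :=
      (Filtration.stronglyAdapted_natural hX.stronglyMeasurable_coin (n + 1)).measurable
    have hXn := ih.mono (Filtration.mono _ n.le_succ) le_rfl
    rw [funext (hX.succ n)]
    exact measurable_uncurry_polarStep.comp (hB.prodMk hXn)

lemma measurable (hX : IsPolarization μ B ε X) (n : ℕ) : Measurable (X n) :=
  (hX.measurable_natural n).mono (Filtration.le _ n) le_rfl

lemma integral_comp_succ [IsFiniteMeasure μ] (hX : IsPolarization μ B ε X) {g : ℝ → ℝ}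
    (hg : Continuous g) (n : ℕ) :
    ∫ ω, g (X (n + 1) ω) ∂μ =
      ∫ ω, (g (polarStep true (X n ω)) + g (polarStep false (X n ω))) / 2 ∂μ := by
  simp_rw [hX.succ n]
  exact (hX.iIndepFun_coin.indepFun_of_measurable_natural _ n.lt_succ_self
    (hX.measurable_natural n)
    ).integral_apply_coin_eq_average ((hX.stronglyMeasurable_coin _).measurable)
    (hX.measure_coin_eq_true _) (fun c => (hg.comp (continuous_polarStep c)).measurable)
    (fun c => integrable_comp_of_mem_Icc (hg.comp (continuous_polarStep c)) (hX.measurable n)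
      (hX.mem_Icc n))

lemma integral_eq [IsProbabilityMeasure μ] (hX : IsPolarization μ B ε X) (n : ℕ) :
    ∫ ω, X n ω ∂μ = ε := by
  induction n with
  | zero => simp [hX.zero]
  | succ n ih =>
    have hstep := hX.integral_comp_succ continuous_id n
    simp only [id, polarStep_true_add_false, mul_div_cancel_left₀ _ (two_ne_zero (α := ℝ))]
      at hstep
    rw [hstep, ih]

lemma integral_polarPotential_le [IsProbabilityMeasure μ] (hX : IsPolarization μ B ε X)
    (n : ℕ) : ∫ ω, polarPotential (X n ω) ∂μ ≤ (√3 / 2) ^ n * polarPotential ε := by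
  induction n with
  | zero => simp [hX.zero]
  | succ n ih =>
    calc ∫ ω, polarPotential (X (n + 1) ω) ∂μ
        = ∫ ω, (polarPotential (polarStep true (X n ω)) +
            polarPotential (polarStep false (X n ω))) / 2 ∂μ :=
          hX.integral_comp_succ continuous_polarPotential n
      _ ≤ ∫ ω, √3 / 2 * polarPotential (X n ω) ∂μ := by
          have havg := integrable_comp_of_mem_Icc (μ := μ)
            (g := fun x => (polarPotential (polarStep true x) +
              polarPotential (polarStep false x)) / 2) (by fun_prop) (hX.measurable n)
            (hX.mem_Icc n)
          have hpot := integrable_comp_of_mem_Icc (μ := μ) continuous_polarPotential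
            (hX.measurable n) (hX.mem_Icc n)
          refine integral_mono havg (hpot.const_mul _) fun ω => ?_
          have := polarPotential_polarStep_add_le (hX.mem_Icc n ω)
          dsimp only
          linarith
      _ = √3 / 2 * ∫ ω, polarPotential (X n ω) ∂μ := integral_const_mul _ _
      _ ≤ (√3 / 2) ^ (n + 1) * polarPotential ε := by
          rw [pow_succ', mul_assoc]
          gcongr

lemma ae_summable_polarPotential [IsProbabilityMeasure μ] (hX : IsPolarization μ B ε X) :
    ∀ᵐ ω ∂μ, Summable fun n => polarPotential (X n ω) := by
  have hratio : √3 / 2 < 1 := by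
    rw [div_lt_one two_pos, Real.sqrt_lt' two_pos]
    norm_num
  refine ae_summable_of_summable_integral
    (fun n => integrable_comp_of_mem_Icc continuous_polarPotential (hX.measurable n)
      (hX.mem_Icc n)) (fun n => ae_of_all _ fun ω => Real.sqrt_nonneg _) ?_
  exact Summable.of_nonneg_of_le (fun n => integral_nonneg fun ω => Real.sqrt_nonneg _)
    hX.integral_polarPotential_le
    ((summable_geometric_of_lt_one (by positivity) hratio).mul_right _)

lemma ae_exists_tendsto [IsProbabilityMeasure μ] (hX : IsPolarization μ B ε X) :
    ∀ᵐ ω ∂μ, ∃ l, Tendsto (fun n => X n ω) atTop (𝓝 l) := by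
  filter_upwards [hX.ae_summable_polarPotential] with ω hω
  refine cauchySeq_tendsto_of_complete (cauchySeq_of_summable_dist
    (hω.of_nonneg_of_le (fun _ => dist_nonneg) fun n => ?_))
  rw [dist_comm, Real.dist_eq, hX.succ]
  exact abs_polarStep_sub_le (hX.mem_Icc n ω) _

lemma integral_limit [IsProbabilityMeasure μ] (hX : IsPolarization μ B ε X) {Xinf : Ω → ℝ}
    (hlim : ∀ᵐ ω ∂μ, Tendsto (fun n => X n ω) atTop (𝓝 (Xinf ω))) :
    ∫ ω, Xinf ω ∂μ = ε := by
  have hdom := tendsto_integral_of_dominated_convergence (fun _ => (1 : ℝ))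
    (fun n => (hX.measurable n).aestronglyMeasurable) (integrable_const 1)
    (fun n => ae_of_all _ fun ω => ?_) hlim
  · simp_rw [hX.integral_eq] at hdom
    exact tendsto_nhds_unique hdom tendsto_const_nhds
  · obtain ⟨h0, h1⟩ := hX.mem_Icc n ω
    rw [Real.norm_eq_abs, abs_of_nonneg h0]
    exact h1

end IsPolarization

end

theorem stmt_6 {Ω : Type*} [m : MeasurableSpace Ω] (μ : Measure Ω) [IsProbabilityMeasure μ]
    (B : ℕ → Ω → Bool) (hBm : ∀ n, StronglyMeasurable (B n))
    (hIndep : iIndepFun B μ)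
    (hFair : ∀ n, μ {ω | B n ω = true} = 1 / 2)
    (ε : ℝ) (hε : ε ∈ Set.Icc (0 : ℝ) 1)
    (X : ℕ → Ω → ℝ) (hX0 : ∀ ω, X 0 ω = ε)
    (hXrec : ∀ n ω, X (n + 1) ω =
      if B (n + 1) ω then (X n ω) ^ 2 else 1 - (1 - X n ω) ^ 2) :
    ∃ Xinf : Ω → ℝ,
      (∀ᵐ ω ∂μ, Tendsto (fun n => X n ω) atTop (𝓝 (Xinf ω))) ∧
      (∀ᵐ ω ∂μ, Xinf ω = 0 ∨ Xinf ω = 1) ∧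
      μ {ω | Xinf ω = 1} = ENNReal.ofReal ε := by
  have hX : IsPolarization μ B ε X := ⟨hBm, hIndep, hFair, hε, hX0, hXrec⟩
  obtain ⟨Xinf, hXinf, hlim⟩ := measurable_limit_of_tendsto_metrizable_ae
    (fun n => (hX.measurable n).aemeasurable) hX.ae_exists_tendsto
  have h01 : ∀ᵐ ω ∂μ, Xinf ω = 0 ∨ Xinf ω = 1 := by
    filter_upwards [hlim, hX.ae_summable_polarPotential] with ω hω hsum
    refine eq_zero_or_eq_one_of_polarPotential_eq_zero
      (isClosed_Icc.mem_of_tendsto hω (Eventually.of_forall (hX.mem_Icc · ω))) ?_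
    exact tendsto_nhds_unique ((continuous_polarPotential.tendsto _).comp hω)
      hsum.tendsto_atTop_zero
  refine ⟨Xinf, hlim, h01, ?_⟩
  rw [measure_eq_one_eq_ofReal_integral hXinf h01, hX.integral_limit hlim]
end

section
/- A 2×2 real matrix K is a polarizing kernel if and only if both entries of its second column are nonzero and K is invertible. -/
/-- `K` is a polarizing kernel: writing the two worker outputs as `K.mulVec a`
where `a = (f u₁, f u₂)`, (a) `f u₁` is uniquely determined by both outputs,
and (b) for each `i`, `f u₂` is uniquely determined by `f u₁` together with the
single output `(K.mulVec a) i`. -/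
def IsPolarizingKernel (K : Matrix (Fin 2) (Fin 2) ℝ) : Prop :=
  (∀ a a' : Fin 2 → ℝ, K.mulVec a = K.mulVec a' → a 0 = a' 0) ∧
  (∀ i : Fin 2, ∀ a a' : Fin 2 → ℝ,
    a 0 = a' 0 → K.mulVec a i = K.mulVec a' i → a 1 = a' 1)

theorem stmt_7 (K : Matrix (Fin 2) (Fin 2) ℝ) :
    IsPolarizingKernel K ↔ (K 0 1 ≠ 0 ∧ K 1 1 ≠ 0 ∧ IsUnit K.det) := by
  constructor
  · rintro ⟨h0, h1⟩
    have hcol : ∀ i : Fin 2, K i 1 ≠ 0 := by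
      intro i hK
      have := h1 i ![0, 0] ![0, 1] (by simp) ?_
      · simpa using this
      · simp [Matrix.mulVec, dotProduct, Fin.sum_univ_two, hK]
    have hinj : Function.Injective K.mulVec := by
      intro a a' h
      have ha0 := h0 a a' h
      have ha1 := h1 0 a a' ha0 (congrFun h 0)
      funext j
      fin_cases j <;> assumption
    have := Matrix.mulVec_injective_iff_isUnit.mp hinj
    exact ⟨hcol 0, hcol 1, (Matrix.isUnit_iff_isUnit_det K).mp this⟩
  · rintro ⟨h01, h11, hdet⟩
    have hinj : Function.Injective K.mulVec :=
      Matrix.mulVec_injective_iff_isUnit.mpr ((Matrix.isUnit_iff_isUnit_det K).mpr hdet)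
    refine ⟨fun a a' h => by rw [hinj h], fun i a a' h0 hi => ?_⟩
    have hKi1 : K i 1 ≠ 0 := by fin_cases i <;> assumption
    have : K i 0 * a 0 + K i 1 * a 1 = K i 0 * a' 0 + K i 1 * a' 1 := by
      simpa [Matrix.mulVec, dotProduct, Fin.sum_univ_two] using hi
    rw [h0] at this
    have := add_left_cancel this
    exact mul_left_cancel₀ hKi1 this
end

section
/- Define the variance-like quantity Vₙ = E[εₙ(1-εₙ)] for the polarization martingale (ε₀ = ε, εₙ₊₁ ∈ {εₙ², 1-(1-εₙ)²} each with probability 1/2). Then Vₙ₊₁ ≤ Vₙ, i.e., E[εₙ₊₁(1-εₙ₊₁)] ≤ E[εₙ(1-εₙ)], with equality iff εₙ ∈ {0,1} almost surely. -/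
open MeasureTheory ProbabilityTheory
open scoped ENNReal

theorem stmt_17 {Ω : Type*} [m : MeasurableSpace Ω] (μ : Measure Ω) [IsProbabilityMeasure μ]
    (B : ℕ → Ω → Bool) (hBm : ∀ n, StronglyMeasurable (B n))
    (hIndep : iIndepFun B μ)
    (hFair : ∀ n, μ {ω | B n ω = true} = 1 / 2)
    (ε : ℝ) (hε : ε ∈ Set.Icc (0 : ℝ) 1)
    (X : ℕ → Ω → ℝ) (hX0 : ∀ ω, X 0 ω = ε)
    (hXrec : ∀ n ω, X (n + 1) ω =
      if B (n + 1) ω then (X n ω) ^ 2 else 1 - (1 - X n ω) ^ 2) :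
    ∀ n : ℕ,
      (∫ ω, X (n + 1) ω * (1 - X (n + 1) ω) ∂μ) ≤ ∫ ω, X n ω * (1 - X n ω) ∂μ ∧
      ((∫ ω, X (n + 1) ω * (1 - X (n + 1) ω) ∂μ) = (∫ ω, X n ω * (1 - X n ω) ∂μ) ↔
        ∀ᵐ ω ∂μ, X n ω = 0 ∨ X n ω = 1) := by
  classical
  have hBmeas : ∀ n, Measurable (B n) := fun n => (hBm n).measurable
  -- X n stays in [0,1]
  have hmem : ∀ n ω, X n ω ∈ Set.Icc (0:ℝ) 1 := by
    intro n
    induction n with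
    | zero => intro ω; rw [hX0]; exact hε
    | succ n ih =>
      intro ω
      rcases ih ω with ⟨h0, h1⟩
      rw [hXrec]
      split
      · exact ⟨by positivity, by nlinarith⟩
      · exact ⟨by nlinarith, by nlinarith⟩
  -- representation of X n as a function of B 0, ..., B n
  have hrep : ∀ n, ∃ F : ((Finset.range (n+1) : Finset ℕ) → Bool) → ℝ,
      ∀ ω, X n ω = F (fun i => B i ω) := by
    intro n
    induction n with
    | zero => exact ⟨fun _ => ε, fun ω => hX0 ω⟩
    | succ n ih =>
      obtain ⟨F, hF⟩ := ih
      have hmm : ∀ i : (Finset.range (n+1) : Finset ℕ), (i : ℕ) ∈ Finset.range (n+2) := by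
        intro i
        have := i.2
        rw [Finset.mem_range] at this ⊢
        omega
      refine ⟨fun v => if v ⟨n+1, by rw [Finset.mem_range]; omega⟩ then
          (F (fun i => v ⟨i, hmm i⟩))^2
        else 1 - (1 - F (fun i => v ⟨i, hmm i⟩))^2,
        fun ω => ?_⟩
      rw [hXrec, hF ω]
  -- measurability of X n
  have hXmeas : ∀ n, Measurable (X n) := by
    intro n
    obtain ⟨F, hF⟩ := hrep n
    have : X n = F ∘ (fun ω (i : (Finset.range (n+1) : Finset ℕ)) => B i ω) := funext hF
    rw [this]
    exact (measurable_of_countable F).comp (measurable_pi_lambda _ fun i => hBmeas i)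
  -- independence of B (n+1) and X n
  have hind : ∀ n, IndepFun (B (n+1)) (X n) μ := by
    intro n
    obtain ⟨F, hF⟩ := hrep n
    have h1 : IndepFun (fun ω (i : (({n+1} : Finset ℕ) : Finset ℕ)) => B i ω)
        (fun ω (i : (Finset.range (n+1) : Finset ℕ)) => B i ω) μ :=
      hIndep.indepFun_finset _ _ (by simp) hBmeas
    have h2 := h1.comp (φ := fun v => v ⟨n+1, by simp⟩) (ψ := F)
      (measurable_of_countable _) (measurable_of_countable _)
    have hXeq : X n = F ∘ (fun ω (i : (Finset.range (n+1) : Finset ℕ)) => B i ω) := funext hF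
    rw [hXeq]
    exact h2
  -- integrability helper
  have hbdd : ∀ (f : Ω → ℝ), Measurable f → (∀ ω, |f ω| ≤ 1) → Integrable f μ := by
    intro f hf hb
    exact (integrable_const (1:ℝ)).mono' hf.aestronglyMeasurable (Filter.Eventually.of_forall hb)
  intro n
  set Z := X n with hZdef
  have hZ0 : ∀ ω, 0 ≤ Z ω := fun ω => (hmem n ω).1
  have hZ1 : ∀ ω, Z ω ≤ 1 := fun ω => (hmem n ω).2
  have hZmeas : Measurable Z := hXmeas n
  set Y : Ω → ℝ := fun ω => if B (n+1) ω then 1 else 0 with hYdef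
  set g : Ω → ℝ := fun ω => (Z ω)^2 * (1 - (Z ω)^2) with hgdef
  set h : Ω → ℝ := fun ω => (1 - (1 - Z ω)^2) * (1 - Z ω)^2 with hhdef
  set d : Ω → ℝ := fun ω => (Z ω)^2 * (1 - Z ω)^2 with hddef
  have hgm : Measurable g := by rw [hgdef]; fun_prop
  have hhm : Measurable h := by rw [hhdef]; fun_prop
  have hdm : Measurable d := by rw [hddef]; fun_prop
  have hYm : Measurable Y := by
    have : Y = (fun b : Bool => if b then (1:ℝ) else 0) ∘ B (n+1) := rfl
    rw [this]; exact (measurable_of_countable _).comp (hBmeas (n+1))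
  have hgi : Integrable g μ := hbdd g hgm (fun ω => by
    have h0 := hZ0 ω; have h1 := hZ1 ω
    simp only [hgdef]; rw [abs_le]
    constructor <;> nlinarith [sq_nonneg (Z ω), sq_nonneg (1 - Z ω), sq_nonneg (1 + Z ω),
      mul_nonneg h0 (sub_nonneg.mpr h1), sq_nonneg (Z ω * (1 - Z ω))])
  have hhi : Integrable h μ := hbdd h hhm (fun ω => by
    have h0 := hZ0 ω; have h1 := hZ1 ω
    simp only [hhdef]; rw [abs_le]
    constructor <;> nlinarith [sq_nonneg (Z ω), sq_nonneg (1 - Z ω), sq_nonneg (1 + Z ω),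
      mul_nonneg h0 (sub_nonneg.mpr h1), sq_nonneg (Z ω * (1 - Z ω))])
  have hdi : Integrable d μ := hbdd d hdm (fun ω => by
    have h0 := hZ0 ω; have h1 := hZ1 ω
    simp only [hddef]; rw [abs_le]
    constructor <;> nlinarith [sq_nonneg (Z ω), sq_nonneg (1 - Z ω),
      mul_nonneg h0 (sub_nonneg.mpr h1), sq_nonneg (Z ω * (1 - Z ω))])
  have hZi : Integrable (fun ω => Z ω * (1 - Z ω)) μ := hbdd _ (by fun_prop) (fun ω => by
    have h0 := hZ0 ω; have h1 := hZ1 ω; rw [abs_le]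
    constructor <;> nlinarith [mul_nonneg h0 (sub_nonneg.mpr h1)])
  have hYi : Integrable Y μ := hbdd Y hYm (fun ω => by
    simp only [hYdef]; split <;> simp)
  have h1Yi : Integrable (fun ω => 1 - Y ω) μ := (integrable_const (1:ℝ)).sub hYi
  -- ∫ Y = 1/2
  have hintY : ∫ ω, Y ω ∂μ = 1/2 := by
    have hs : MeasurableSet {ω | B (n+1) ω = true} :=
      hBmeas (n+1) (measurableSet_singleton true)
    have hYind : Y = Set.indicator {ω | B (n+1) ω = true} (fun _ => (1:ℝ)) := by
      funext ω
      by_cases hb : B (n+1) ω = true <;> simp [hYdef, Set.indicator, hb]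
    rw [hYind, integral_indicator_const _ hs, measureReal_def, hFair (n+1)]
    norm_num [ENNReal.toReal_div]
  have hint1Y : ∫ ω, (1 - Y ω) ∂μ = 1/2 := by
    rw [integral_sub (integrable_const 1) hYi, hintY]
    simp only [integral_const, measure_univ, probReal_univ, ENNReal.toReal_one, smul_eq_mul, one_mul]
    norm_num
  -- independence compositions
  have hYg : IndepFun Y g μ :=
    (hind n).comp (φ := fun b : Bool => if b then (1:ℝ) else 0)
      (ψ := fun x : ℝ => x^2 * (1 - x^2)) (measurable_of_countable _) (by fun_prop)
  have hYh : IndepFun (fun ω => 1 - Y ω) h μ :=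
    (hind n).comp (φ := fun b : Bool => 1 - (if b then (1:ℝ) else 0))
      (ψ := fun x : ℝ => (1 - (1 - x)^2) * (1 - x)^2) (measurable_of_countable _) (by fun_prop)
  -- pointwise identity for the (n+1)-st integrand
  have hpt : ∀ ω, X (n+1) ω * (1 - X (n+1) ω) = Y ω * g ω + (1 - Y ω) * h ω := by
    intro ω
    rw [hXrec]
    by_cases hb : B (n+1) ω = true <;>
      simp only [hb, if_true, if_false, Bool.false_eq_true, hYdef, hgdef, hhdef] <;> ring
  -- the key integral computation
  have e1 : ∫ ω, Y ω * g ω ∂μ = (∫ ω, Y ω ∂μ) * ∫ ω, g ω ∂μ :=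
    hYg.integral_fun_mul_eq_mul_integral hYi.aestronglyMeasurable hgi.aestronglyMeasurable
  have e2 : ∫ ω, (1 - Y ω) * h ω ∂μ = (∫ ω, (1 - Y ω) ∂μ) * ∫ ω, h ω ∂μ :=
    hYh.integral_fun_mul_eq_mul_integral h1Yi.aestronglyMeasurable hhi.aestronglyMeasurable
  have hYgi : Integrable (fun ω => Y ω * g ω) μ := hYg.integrable_mul hYi hgi
  have hYhi : Integrable (fun ω => (1 - Y ω) * h ω) μ := hYh.integrable_mul h1Yi hhi
  have hsum : ∫ ω, g ω ∂μ + ∫ ω, h ω ∂μ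
      = (∫ ω, Z ω * (1 - Z ω) ∂μ) * 2 - (∫ ω, d ω ∂μ) * 2 := by
    have e : ∫ ω, (g ω + h ω) ∂μ
        = ∫ ω, ((Z ω * (1 - Z ω) + Z ω * (1 - Z ω)) - (d ω + d ω)) ∂μ := by
      congr 1; funext ω; simp only [hgdef, hhdef, hddef]; ring
    have i1 : Integrable (fun ω => Z ω * (1 - Z ω) + Z ω * (1 - Z ω)) μ := hZi.add hZi
    have i2 : Integrable (fun ω => d ω + d ω) μ := hdi.add hdi
    rw [← integral_add hgi hhi, e, integral_sub i1 i2,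
      integral_add hZi hZi, integral_add hdi hdi]
    ring
  have key : ∫ ω, X (n+1) ω * (1 - X (n+1) ω) ∂μ
      = (∫ ω, Z ω * (1 - Z ω) ∂μ) - ∫ ω, d ω ∂μ := by
    have h1 : ∫ ω, X (n+1) ω * (1 - X (n+1) ω) ∂μ
        = ∫ ω, (Y ω * g ω + (1 - Y ω) * h ω) ∂μ := by
      congr 1; funext ω; exact hpt ω
    rw [h1, integral_add hYgi hYhi, e1, e2, hintY, hint1Y]
    linarith [hsum]
  have hDnn : 0 ≤ ∫ ω, d ω ∂μ :=
    integral_nonneg fun ω => by simp only [hddef]; positivity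
  constructor
  · rw [key]; linarith
  · rw [key, sub_eq_self]
    rw [integral_eq_zero_iff_of_nonneg
      (fun ω => by simp only [hddef, Pi.zero_apply]; positivity) hdi]
    constructor
    · intro hd0
      filter_upwards [hd0] with ω hω
      simp only [hddef, Pi.zero_apply] at hω
      rcases mul_eq_zero.mp hω with h' | h'
      · left; exact pow_eq_zero_iff (by norm_num) |>.mp h'
      · right; have := pow_eq_zero_iff (n := 2) (by norm_num) |>.mp h'; linarith
    · intro hae
      filter_upwards [hae] with ω hω
      rcases hω with h' | h' <;> simp [hddef, h']
end
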